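/- Let ρ be a Sylvester rank function on the category of finitely presented right R-modules with ρ(R) = 1. Then for every finitely presented module M with ρ(M) = m, there exists a ρ-full map from R^m to M. -/

import Mathlib

open CategoryTheory CategoryTheory.Limits

universe u

/-- A Sylvester rank function on the category of finitely presented right `R`-modules:
a map from (finitely presented) `R`-modules to `ℕ`, invariant under isomorphism,
additive on direct sums, and satisfying `ρ(coker f) ≤ ρ(B) ≤ ρ(A) + ρ(coker f)` for
every map `f : A ⟶ B` of finitely presented modules. -/
structure SylvesterRankFP (R : Type u) [Ring R] where
  rk : ModuleCat.{u} R → ℕ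
  rk_iso : ∀ {A B : ModuleCat.{u} R}, Module.FinitePresentation R A →
    Module.FinitePresentation R B → (A ≅ B) → rk A = rk B
  rk_biprod : ∀ (A B : ModuleCat.{u} R), Module.FinitePresentation R A →
    Module.FinitePresentation R B → rk (A ⊞ B) = rk A + rk B
  rk_coker_le : ∀ {A B : ModuleCat.{u} R} (f : A ⟶ B), Module.FinitePresentation R A →
    Module.FinitePresentation R B → rk (cokernel f) ≤ rk B
  rk_le : ∀ {A B : ModuleCat.{u} R} (f : A ⟶ B), Module.FinitePresentation R A →
    Module.FinitePresentation R B → rk B ≤ rk A + rk (cokernel f)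

/-- A map `f : A ⟶ B` is `ρ`-full if `ρ(A) = ρ(B)` and `ρ(coker f) = 0`. -/
def SylvesterRankFP.IsRhoFull {R : Type u} [Ring R] (ρ : SylvesterRankFP R)
    {A B : ModuleCat.{u} R} (f : A ⟶ B) : Prop :=
  ρ.rk A = ρ.rk B ∧ ρ.rk (cokernel f) = 0

/-!
Write `q N = ρ(M ⧸ N)` for finitely generated submodules `N ≤ M`. Adding one generator `x`
lowers `q` by `0` or `1` (look at `R → M ⧸ N → M ⧸ (N + Rx) → 0`), and `q` is submodular, by
the exact sequence `M ⧸ N → M ⧸ N₁ ⊕ M ⧸ N₂ → M ⧸ (N₁ + N₂) → 0`. Hence `m - q` restricted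
to spans of generators is a matroid rank function: running greedily through a finite
generating set and keeping exactly the generators that lower `q` produces `m` elements whose
span `N` has `q N = 0`, and these elements define the `ρ`-full map `R^m → M`.
-/

namespace Submodule

variable {R M : Type*} [Ring R] [AddCommGroup M] [Module R M]

theorem finitePresentation_quotient [Module.FinitePresentation R M] {N : Submodule R M}
    (hN : N.FG) : Module.FinitePresentation R (M ⧸ N) :=
  Module.finitePresentation_of_surjective N.mkQ N.mkQ_surjective (by rwa [ker_mkQ])

theorem exact_toSpanSingleton_factor (N : Submodule R M) (x : M) :
    Function.Exact (LinearMap.toSpanSingleton R (M ⧸ N) (N.mkQ x))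
      (factor (le_sup_left : N ≤ N ⊔ R ∙ x)) := by
  rw [LinearMap.exact_iff, ← LinearMap.span_singleton_eq_range, ker_mapQ, comap_id, map_sup,
    mkQ_map_self, bot_sup_eq, map_span, Set.image_singleton]

theorem exact_factor_prod_factor_sub_factor {N N₁ N₂ : Submodule R M} (h₁ : N ≤ N₁) (h₂ : N ≤ N₂) :
    Function.Exact ((factor h₁).prod (factor h₂))
      (factor (le_sup_left : N₁ ≤ N₁ ⊔ N₂) ∘ₗ LinearMap.fst R (M ⧸ N₁) (M ⧸ N₂) -
        factor (le_sup_right : N₂ ≤ N₁ ⊔ N₂) ∘ₗ LinearMap.snd R (M ⧸ N₁) (M ⧸ N₂)) := by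
  rintro ⟨a, b⟩
  induction a using Submodule.Quotient.induction_on with | _ m₁ => ?_
  induction b using Submodule.Quotient.induction_on with | _ m₂ => ?_
  simp only [LinearMap.sub_apply, LinearMap.comp_apply, LinearMap.fst_apply,
    LinearMap.snd_apply, Set.mem_range, LinearMap.prod_apply, Prod.ext_iff, Function.prod,
    mapQ_apply, LinearMap.id_apply, ← Quotient.mk_sub, Quotient.mk_eq_zero]
  constructor
  · intro h
    obtain ⟨n₁, hn₁, n₂, hn₂, hn⟩ := mem_sup.1 h
    refine ⟨Quotient.mk (m₁ - n₁), (Quotient.eq _).2 ?_, (Quotient.eq _).2 ?_⟩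
    · simpa using N₁.neg_mem hn₁
    · convert hn₂ using 1
      rw [LinearMap.id_apply, eq_sub_of_add_eq' hn, sub_right_comm]
  · rintro ⟨y, hy₁, hy₂⟩
    induction y using Submodule.Quotient.induction_on with | _ m => ?_
    rw [mapQ_apply, LinearMap.id_apply, Quotient.eq] at hy₁ hy₂
    convert sub_mem (mem_sup_right hy₂) (mem_sup_left hy₁) using 1
    abel

end Submodule

namespace SylvesterRankFP

variable {R : Type u} [Ring R] (ρ : SylvesterRankFP R)

section Basic

variable {A B C : Type u} [AddCommGroup A] [Module R A] [AddCommGroup B] [Module R B]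
  [AddCommGroup C] [Module R C]

theorem rk_congr [Module.FinitePresentation R A] [Module.FinitePresentation R B]
    (e : A ≃ₗ[R] B) : ρ.rk (.of R A) = ρ.rk (.of R B) :=
  ρ.rk_iso ‹_› ‹_› e.toModuleIso

theorem rk_prod [Module.FinitePresentation R A] [Module.FinitePresentation R B] :
    ρ.rk (.of R (A × B)) = ρ.rk (.of R A) + ρ.rk (.of R B) := by
  have e := ModuleCat.biprodIsoProd (.of R A) (.of R B)
  rw [← ρ.rk_biprod _ _ ‹_› ‹_›]
  exact ρ.rk_iso inferInstance (.of_equiv e.toLinearEquiv.symm) e.symm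

theorem rk_eq_zero_of_subsingleton [Subsingleton A] : ρ.rk (.of R A) = 0 := by
  have h := ρ.rk_prod (A := A) (B := A)
  rw [ρ.rk_congr (LinearEquiv.ofSubsingleton (A × A) A)] at h
  omega

theorem rk_fin_fun (hR : ρ.rk (.of R R) = 1) (n : ℕ) : ρ.rk (.of R (Fin n → R)) = n := by
  induction n with
  | zero => exact ρ.rk_eq_zero_of_subsingleton
  | succ n ih =>
    rw [← ρ.rk_congr (Fin.consLinearEquiv R fun _ : Fin (n + 1) => R), ρ.rk_prod, hR, ih,
      add_comm]

theorem rk_cokernel_eq_of_exact {X Y : ModuleCat.{u} R} (f : X ⟶ Y) (g : Y →ₗ[R] C)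
    [Module.FinitePresentation R C] (hfg : Function.Exact f.hom g)
    (hg : Function.Surjective g) : ρ.rk (cokernel f) = ρ.rk (.of R C) :=
  let e := ModuleCat.cokernelIsoRangeQuotient f ≪≫ (hfg.linearEquivOfSurjective hg).toModuleIso
  ρ.rk_iso (.of_equiv e.toLinearEquiv.symm) inferInstance e

end Basic

section QuotientRank

variable {M : Type u} [AddCommGroup M] [Module R M]

def quotRk (N : Submodule R M) : ℕ :=
  ρ.rk (.of R (M ⧸ N))

variable [Module.FinitePresentation R M] {N : Submodule R M}

theorem quotRk_bot : ρ.quotRk (⊥ : Submodule R M) = ρ.rk (.of R M) :=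
  have := Submodule.finitePresentation_quotient (Submodule.fg_bot : (⊥ : Submodule R M).FG)
  ρ.rk_congr (Submodule.quotEquivOfEqBot ⊥ rfl)

theorem rk_cokernel_eq_quotRk_range {X : ModuleCat.{u} R} [Module.Finite R X]
    (f : X ⟶ .of R M) : ρ.rk (cokernel f) = ρ.quotRk (LinearMap.range f.hom) :=
  have := Submodule.finitePresentation_quotient (Module.Finite.iff_fg.1 inferInstance :
    (LinearMap.range f.hom).FG)
  ρ.rk_cokernel_eq_of_exact f _ (LinearMap.exact_map_mkQ_range _) (Submodule.mkQ_surjective _)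

theorem rk_cokernel_toSpanSingleton (hN : N.FG) (x : M) :
    ρ.rk (cokernel (ModuleCat.ofHom (LinearMap.toSpanSingleton R (M ⧸ N) (N.mkQ x)))) =
      ρ.quotRk (N ⊔ R ∙ x) :=
  have := Submodule.finitePresentation_quotient (hN.sup (Submodule.fg_span_singleton x))
  ρ.rk_cokernel_eq_of_exact _ _ (N.exact_toSpanSingleton_factor x) (Submodule.factor_surjective _)

theorem quotRk_sup_span_singleton_le (hN : N.FG) (x : M) :
    ρ.quotRk (N ⊔ R ∙ x) ≤ ρ.quotRk N :=
  ρ.rk_cokernel_toSpanSingleton hN x ▸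
    ρ.rk_coker_le _ inferInstance (Submodule.finitePresentation_quotient hN)

theorem quotRk_le_quotRk_sup_span_singleton_add_one (hR : ρ.rk (.of R R) = 1) (hN : N.FG)
    (x : M) : ρ.quotRk N ≤ ρ.quotRk (N ⊔ R ∙ x) + 1 := by
  have h := ρ.rk_le (ModuleCat.ofHom (LinearMap.toSpanSingleton R (M ⧸ N) (N.mkQ x)))
    inferInstance (Submodule.finitePresentation_quotient hN)
  rwa [ρ.rk_cokernel_toSpanSingleton hN x, hR, add_comm] at h

theorem quotRk_add_quotRk_le {N₁ N₂ : Submodule R M} (hN : N.FG) (hN₁ : N₁.FG) (hN₂ : N₂.FG)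
    (h₁ : N ≤ N₁) (h₂ : N ≤ N₂) :
    ρ.quotRk N₁ + ρ.quotRk N₂ ≤ ρ.quotRk N + ρ.quotRk (N₁ ⊔ N₂) := by
  have := Submodule.finitePresentation_quotient hN₁
  have := Submodule.finitePresentation_quotient hN₂
  have := Submodule.finitePresentation_quotient (hN₁.sup hN₂)
  have h := ρ.rk_le (ModuleCat.ofHom ((Submodule.factor h₁).prod (Submodule.factor h₂)))
    (Submodule.finitePresentation_quotient hN) inferInstance
  rw [ρ.rk_cokernel_eq_of_exact _ _ (Submodule.exact_factor_prod_factor_sub_factor h₁ h₂),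
    ρ.rk_prod] at h
  · exact h
  · intro z
    obtain ⟨m, rfl⟩ := Submodule.mkQ_surjective _ z
    exact ⟨(N₁.mkQ m, 0), by simp⟩

theorem quotRk_sup_sup_span_singleton_eq {x : M} (hN : N.FG)
    (hx : ρ.quotRk (N ⊔ R ∙ x) = ρ.quotRk N) (P : Submodule R M) (hP : P.FG) :
    ρ.quotRk (N ⊔ P ⊔ R ∙ x) = ρ.quotRk (N ⊔ P) := by
  induction P, hP using Submodule.fg_induction generalizing N with
  | singleton y =>
    have hy := hN.sup (Submodule.fg_span_singleton y)
    refine le_antisymm (ρ.quotRk_sup_span_singleton_le hy x) ?_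
    have h := ρ.quotRk_add_quotRk_le hN (hN.sup (Submodule.fg_span_singleton x)) hy
      le_sup_left le_sup_left
    rw [hx, sup_sup_sup_comm, sup_idem, sup_comm (R ∙ x), ← sup_assoc] at h
    omega
  | sup P₁ P₂ hP₁ hP₂ ih₁ ih₂ =>
    rw [← sup_assoc]
    exact ih₂ (hN.sup hP₁) (ih₁ hN hx)

theorem exists_fin_quotRk_sup_span_range_eq_zero (hR : ρ.rk (.of R R) = 1) (s : Finset M)
    (hN : N.FG) (hs : ρ.quotRk (N ⊔ Submodule.span R s) = 0) :
    ∃ v : Fin (ρ.quotRk N) → M, ρ.quotRk (N ⊔ Submodule.span R (Set.range v)) = 0 := by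
  classical
  induction s using Finset.induction_on generalizing N with
  | empty =>
    rw [Finset.coe_empty, Submodule.span_empty, sup_bot_eq] at hs
    rw [hs]
    exact ⟨Fin.elim0, by rwa [Set.range_eq_empty, Submodule.span_empty, sup_bot_eq]⟩
  | insert x s _ ih =>
    rw [Finset.coe_insert, Submodule.span_insert, ← sup_assoc] at hs
    obtain ⟨v, hv⟩ := ih (hN.sup (Submodule.fg_span_singleton x)) hs
    rcases (ρ.quotRk_sup_span_singleton_le hN x).eq_or_lt with hx | hx
    · rw [← hx]
      refine ⟨v, ?_⟩
      rwa [← ρ.quotRk_sup_sup_span_singleton_eq hN hx _ (Submodule.fg_span (Set.finite_range v)),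
        sup_right_comm]
    · rw [le_antisymm (ρ.quotRk_le_quotRk_sup_span_singleton_add_one hR hN x) hx]
      exact ⟨Fin.cons x v, by rwa [Fin.range_cons, Submodule.span_insert, ← sup_assoc]⟩

end QuotientRank

end SylvesterRankFP

/-- Let `ρ` be a Sylvester rank function on finitely presented right `R`-modules with
`ρ(R) = 1`.  Then for every finitely presented module `M` with `ρ(M) = m` there exists a
`ρ`-full map `R^m ⟶ M`. -/
theorem exists_rhoFull_from_free {R : Type u} [Ring R] (ρ : SylvesterRankFP R)
    (hR : ρ.rk (ModuleCat.of R R) = 1)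
    (M : ModuleCat.{u} R) (hM : Module.FinitePresentation R M)
    (m : ℕ) (hm : ρ.rk M = m) :
    ∃ φ : ModuleCat.of R (Fin m → R) ⟶ M, ρ.IsRhoFull φ := by
  obtain ⟨s, hs⟩ : (⊤ : Submodule R M).FG := Module.Finite.fg_top
  have hq_bot : ρ.quotRk (⊥ : Submodule R M) = m := ρ.quotRk_bot.trans hm
  obtain ⟨v, hv⟩ := ρ.exists_fin_quotRk_sup_span_range_eq_zero hR s Submodule.fg_bot
    (by rw [bot_sup_eq, hs]; exact ρ.rk_eq_zero_of_subsingleton)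
  rw [bot_sup_eq] at hv
  rw [← hq_bot]
  refine ⟨ModuleCat.ofHom (Fintype.linearCombination R v), ?_, ?_⟩
  · rw [ρ.rk_fin_fun hR, hq_bot, hm]
  · rwa [ρ.rk_cokernel_eq_quotRk_range, ModuleCat.hom_ofHom, Fintype.range_linearCombination]
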